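/- Consider an undirected graph G with n vertices that has a spanning tree, with an arbitrary orientation, incidence matrix H ∈ ℝ^{m×n}, and H̄ = H ⊗ I_d. Let p : ℝ → ℝ^{dn} be a differentiable trajectory with bounded derivative v(t) = ṗ(t), whose edge vectors e_k(t) = (H̄p(t))_k are nonzero for all t, with bearings g_k(t) = e_k(t)/‖e_k(t)‖ and bearing Laplacian L_B(t) = H̄ᵀ blkdiag(π_{g_1(t)},…,π_{g_m(t)}) H̄. Assume the formation is bearing persistently exciting: there exist T > 0 and μ > 0 such that ∫_t^{t+T} L_B(τ) dτ ≥ μ H̄ᵀH̄ for all t. Then for any solution p̂ : ℝ → ℝ^{dn} of the observer dynamics dp̂/dt = v(t) − L_B(t) p̂(t), the error ζ(t) = p̂(t) − p(t) − (1/n) U Uᵀ (p̂(0) − p(0)) converges to zero uniformly globally exponentially; in particular p̂(t) converges exponentially to p(t) plus the fixed translational vector (1/n) U Uᵀ (p̂(0) − p(0)). -/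

import Mathlib

/-!
The error `ζ = p̂ - p - (1/n) U Uᵀ (p̂(0) - p(0))` solves `ζ' = -L_B(t) ζ`, since `L_B p = 0` and
`L_B U = 0`; moreover `Uᵀ ζ` is constant, hence zero. As `L_B = H̄ᵀ Π H̄` with `Π` an orthogonal
projection, `‖ζ‖²` has derivative `-2 ζᵀ L_B ζ ≤ 0` and `‖L_B x‖² ≤ α xᵀ L_B x`. By Cauchy–Schwarz,
over a window `[t, t + T]` the trajectory moves (squared) by at most `α T S`, where `S` is the
energy dissipated in the window. Persistent excitation, together with the spectral gap of
`H̄ᵀ H̄` on `(range U)ᗮ` coming from `rank H = n - 1`, then forces `S ≥ c ‖ζ(t)‖²`, so `‖ζ‖²`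
contracts by a fixed factor over every period `T`.
-/

open MeasureTheory Matrix
open scoped Kronecker

/-- The projection operator `π_y = I_d - y yᵀ`. -/
noncomputable def proj {d : ℕ} (y : Fin d → ℝ) : Matrix (Fin d) (Fin d) ℝ :=
  1 - Matrix.vecMulVec y y

/-- `H` is the incidence matrix of an oriented graph. -/
def IsIncidence {m n : ℕ} (H : Matrix (Fin m) (Fin n) ℝ) : Prop :=
  ∃ head tail : Fin m → Fin n, (∀ k, head k ≠ tail k) ∧
    ∀ k i, H k i = if i = head k then 1 else if i = tail k then -1 else 0

/-- `H̄ = H ⊗ I_d`. -/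
noncomputable def Hbar {m n : ℕ} (d : ℕ) (H : Matrix (Fin m) (Fin n) ℝ) :
    Matrix (Fin m × Fin d) (Fin n × Fin d) ℝ :=
  H ⊗ₖ (1 : Matrix (Fin d) (Fin d) ℝ)

/-- `Π = blkdiag(π_{g_1}, …, π_{g_m})`. -/
noncomputable def blkProj {m d : ℕ} (g : Fin m → Fin d → ℝ) :
    Matrix (Fin m × Fin d) (Fin m × Fin d) ℝ :=
  Matrix.of fun p q => if p.1 = q.1 then proj (g p.1) p.2 q.2 else 0

/-- Euclidean norm of a vector in `ℝ^d`. -/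
noncomputable def enorm {d : ℕ} (v : Fin d → ℝ) : ℝ := Real.sqrt (v ⬝ᵥ v)

/-- The bearing (unit vector) of a nonzero vector. -/
noncomputable def bearingOf {d : ℕ} (v : Fin d → ℝ) : Fin d → ℝ := (_root_.enorm v)⁻¹ • v

/-- The `k`-th edge vector `e_k = (H̄ p)_k ∈ ℝ^d` of a configuration `p`. -/
noncomputable def edgeVec {m n d : ℕ} (H : Matrix (Fin m) (Fin n) ℝ)
    (p : Fin n × Fin d → ℝ) (k : Fin m) : Fin d → ℝ :=
  fun i => (Hbar d H).mulVec p (k, i)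

/-- The bearing Laplacian `L_B = H̄ᵀ Π H̄` of a configuration `p`. -/
noncomputable def LB {m n : ℕ} {d : ℕ} (H : Matrix (Fin m) (Fin n) ℝ)
    (p : Fin n × Fin d → ℝ) : Matrix (Fin n × Fin d) (Fin n × Fin d) ℝ :=
  (Hbar d H)ᵀ * blkProj (fun k => bearingOf (edgeVec H p k)) * Hbar d H

/-- `U = 1_n ⊗ I_d`. -/
noncomputable def Umat (n d : ℕ) : Matrix (Fin n × Fin d) (Fin d) ℝ :=
  Matrix.of fun p j => if p.2 = j then 1 else 0

section QuadraticForm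

variable {ι κ : Type*} [Fintype ι] [Fintype κ]

lemma dotProduct_self_nonneg (x : ι → ℝ) : 0 ≤ x ⬝ᵥ x :=
  Finset.sum_nonneg fun _ _ => mul_self_nonneg _

lemma dotProduct_self_pos {x : ι → ℝ} (hx : x ≠ 0) : 0 < x ⬝ᵥ x :=
  (dotProduct_self_nonneg x).lt_of_ne' (by simpa using hx)

lemma norm_le_sqrt_dotProduct_self (x : ι → ℝ) : ‖x‖ ≤ √(x ⬝ᵥ x) := by
  refine (pi_norm_le_iff_of_nonneg (Real.sqrt_nonneg _)).2 fun i => ?_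
  rw [Real.norm_eq_abs, ← Real.sqrt_sq_eq_abs]
  exact Real.sqrt_le_sqrt (by
    simpa [sq, dotProduct] using
      Finset.single_le_sum (fun j _ => mul_self_nonneg (x j)) (Finset.mem_univ i))

lemma dotProduct_self_le_card_mul_norm_sq (x : ι → ℝ) :
    x ⬝ᵥ x ≤ Fintype.card ι * ‖x‖ ^ 2 := by
  calc x ⬝ᵥ x ≤ ∑ _i : ι, ‖x‖ ^ 2 :=
        Finset.sum_le_sum fun i _ => by
          simpa [← sq, sq_abs] using pow_le_pow_left₀ (norm_nonneg _) (norm_le_pi_norm x i) 2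
    _ = Fintype.card ι * ‖x‖ ^ 2 := by simp

theorem exists_norm_exp_bound_of_dotProduct_self {Z : ℝ → ι → ℝ}
    (h : ∃ c > 0, ∃ lam > 0, ∀ t₀ t, t₀ ≤ t →
      Z t ⬝ᵥ Z t ≤ c * (Z t₀ ⬝ᵥ Z t₀) * Real.exp (-lam * (t - t₀))) :
    ∃ c > 0, ∃ lam > 0, ∀ t₀ t, t₀ ≤ t → ‖Z t‖ ≤ c * ‖Z t₀‖ * Real.exp (-lam * (t - t₀)) := by
  obtain ⟨c, hc, lam, hlam, h⟩ := h
  -- `card ι + 1` rather than `card ι` keeps the constant positive when `ι` is empty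
  refine ⟨√(c * (Fintype.card ι + 1)), by positivity, lam / 2, by positivity,
    fun t₀ t hle => ?_⟩
  have hexp : Real.exp (-lam * (t - t₀)) = Real.exp (-(lam / 2) * (t - t₀)) ^ 2 := by
    rw [← Real.exp_nat_mul]; ring_nf
  have hcard : Z t₀ ⬝ᵥ Z t₀ ≤ (Fintype.card ι + 1) * ‖Z t₀‖ ^ 2 :=
    (dotProduct_self_le_card_mul_norm_sq _).trans (by gcongr; linarith)
  calc ‖Z t‖ ≤ √(Z t ⬝ᵥ Z t) := norm_le_sqrt_dotProduct_self _
    _ ≤ √((c * (Fintype.card ι + 1)) * (‖Z t₀‖ * Real.exp (-(lam / 2) * (t - t₀))) ^ 2) := by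
        refine Real.sqrt_le_sqrt ((h t₀ t hle).trans ?_)
        rw [hexp]
        calc c * (Z t₀ ⬝ᵥ Z t₀) * Real.exp (-(lam / 2) * (t - t₀)) ^ 2
            ≤ c * ((Fintype.card ι + 1) * ‖Z t₀‖ ^ 2) * Real.exp (-(lam / 2) * (t - t₀)) ^ 2 := by
              gcongr
          _ = _ := by ring
    _ = √(c * (Fintype.card ι + 1)) * ‖Z t₀‖ * Real.exp (-(lam / 2) * (t - t₀)) := by
        rw [Real.sqrt_mul (by positivity), Real.sqrt_sq (by positivity), mul_assoc]

lemma norm_toLp_sq (x : ι → ℝ) : ‖WithLp.toLp 2 x‖ ^ 2 = x ⬝ᵥ x := by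
  rw [EuclideanSpace.real_norm_sq_eq, dotProduct]
  simp [sq]

lemma exists_pos_mul_dotProduct_self_le {B : Matrix κ ι ℝ} (hB : Function.Injective B.mulVec) :
    ∃ c > 0, ∀ x, c * (x ⬝ᵥ x) ≤ B *ᵥ x ⬝ᵥ B *ᵥ x := by
  classical
  obtain ⟨K, hK, hKB⟩ := (Matrix.toEuclideanLin B).exists_antilipschitzWith
    (LinearMap.ker_eq_bot.2 fun x y h =>
      WithLp.ofLp_injective 2 (hB (by simpa using congrArg WithLp.ofLp h)))
  refine ⟨(K ^ 2 : ℝ)⁻¹, by positivity, fun x => ?_⟩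
  have hnorm := ZeroHomClass.bound_of_antilipschitz _ hKB (WithLp.toLp 2 x)
  rw [toLpLin_toLp, toLin'_apply] at hnorm
  rw [← norm_toLp_sq, ← norm_toLp_sq, inv_mul_le_iff₀ (by positivity), ← mul_pow]
  exact pow_le_pow_left₀ (norm_nonneg _) hnorm 2

lemma mulVec_dotProduct_mulVec_self_le (B : Matrix κ ι ℝ) (x : ι → ℝ) :
    B *ᵥ x ⬝ᵥ B *ᵥ x ≤ (∑ k, ∑ i, B k i ^ 2) * (x ⬝ᵥ x) := by
  rw [dotProduct, Finset.sum_mul]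
  refine Finset.sum_le_sum fun k _ => ?_
  simpa [sq, mulVec, dotProduct] using Finset.sum_mul_sq_le_sq_mul_sq Finset.univ (B k) x

lemma dotProduct_sub_mulVec_sub_le {M : Matrix ι ι ℝ} (hM : ∀ x, 0 ≤ x ⬝ᵥ M *ᵥ x)
    (x y : ι → ℝ) :
    (x - y) ⬝ᵥ M *ᵥ (x - y) ≤ 2 * (x ⬝ᵥ M *ᵥ x) + 2 * (y ⬝ᵥ M *ᵥ y) := by
  have := hM (x + y)
  simp only [mulVec_add, mulVec_sub, add_dotProduct, sub_dotProduct, dotProduct_add,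
    dotProduct_sub] at this ⊢
  linarith

lemma dotProduct_transpose_mul_mul_mulVec (B : Matrix κ ι ℝ) (M : Matrix κ κ ℝ) (x : ι → ℝ) :
    x ⬝ᵥ (Bᵀ * M * B) *ᵥ x = B *ᵥ x ⬝ᵥ M *ᵥ (B *ᵥ x) := by
  rw [← mulVec_mulVec, ← mulVec_mulVec, dotProduct_mulVec, vecMul_transpose]

variable {P : Matrix κ κ ℝ}

lemma IsStarProjection.transpose_eq (hP : IsStarProjection P) : Pᵀ = P := by
  have : Pᴴ = P := hP.isSelfAdjoint
  rwa [conjTranspose_eq_transpose_of_trivial] at this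

lemma IsStarProjection.mulVec_dotProduct_mulVec_self (hP : IsStarProjection P) (y : κ → ℝ) :
    P *ᵥ y ⬝ᵥ P *ᵥ y = y ⬝ᵥ P *ᵥ y := by
  calc P *ᵥ y ⬝ᵥ P *ᵥ y = y ᵥ* Pᵀ ⬝ᵥ P *ᵥ y := by rw [vecMul_transpose]
    _ = y ⬝ᵥ P *ᵥ y := by
      rw [← dotProduct_mulVec, mulVec_mulVec, hP.transpose_eq, hP.isIdempotentElem.eq]

lemma IsStarProjection.dotProduct_mulVec_le (hP : IsStarProjection P) (y : κ → ℝ) :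
    y ⬝ᵥ P *ᵥ y ≤ y ⬝ᵥ y := by
  have h := dotProduct_self_nonneg (y - P *ᵥ y)
  have hsymm : P *ᵥ y ⬝ᵥ y = y ⬝ᵥ P *ᵥ y := dotProduct_comm _ _
  simp only [sub_dotProduct, dotProduct_sub, hsymm, hP.mulVec_dotProduct_mulVec_self] at h
  linarith

variable (B : Matrix κ ι ℝ) (hP : IsStarProjection P) (x : ι → ℝ)
include hP

lemma IsStarProjection.dotProduct_transpose_mul_mul_mulVec_nonneg :
    0 ≤ x ⬝ᵥ (Bᵀ * P * B) *ᵥ x := by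
  rw [dotProduct_transpose_mul_mul_mulVec, ← hP.mulVec_dotProduct_mulVec_self]
  exact dotProduct_self_nonneg _

lemma IsStarProjection.dotProduct_transpose_mul_mul_mulVec_le :
    x ⬝ᵥ (Bᵀ * P * B) *ᵥ x ≤ (∑ k, ∑ i, B k i ^ 2) * (x ⬝ᵥ x) := by
  rw [dotProduct_transpose_mul_mul_mulVec]
  exact (hP.dotProduct_mulVec_le _).trans (mulVec_dotProduct_mulVec_self_le B x)

lemma IsStarProjection.transpose_mul_mul_mulVec_dotProduct_self_le :
    (Bᵀ * P * B) *ᵥ x ⬝ᵥ (Bᵀ * P * B) *ᵥ x ≤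
      (∑ k, ∑ i, B k i ^ 2) * (x ⬝ᵥ (Bᵀ * P * B) *ᵥ x) := by
  have hsum : ∑ i, ∑ k, Bᵀ i k ^ 2 = ∑ k, ∑ i, B k i ^ 2 := Finset.sum_comm
  rw [dotProduct_transpose_mul_mul_mulVec, ← hP.mulVec_dotProduct_mulVec_self, ← hsum,
    Matrix.mul_assoc, ← mulVec_mulVec, ← mulVec_mulVec]
  exact mulVec_dotProduct_mulVec_self_le _ _

end QuadraticForm

lemma sq_intervalIntegral_le {f : ℝ → ℝ} (hf : Continuous f) {a b : ℝ} (hab : a ≤ b) :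
    (∫ s in a..b, f s) ^ 2 ≤ (b - a) * ∫ s in a..b, f s ^ 2 := by
  set I := ∫ s in a..b, f s
  set J := ∫ s in a..b, f s ^ 2
  -- the discriminant trick: `∫ ((b - a) f - I)² ≥ 0` expands to `(b - a) ((b - a) J - I²)`
  have hexpand : ∫ s in a..b, ((b - a) * f s - I) ^ 2 = (b - a) * ((b - a) * J - I ^ 2) := by
    have hsq : IntervalIntegrable (fun s => (b - a) ^ 2 * f s ^ 2) volume a b :=
      (continuous_const.mul (hf.pow 2)).intervalIntegrable _ _
    have hlin : IntervalIntegrable (fun s => 2 * (b - a) * I * f s) volume a b :=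
      (continuous_const.mul hf).intervalIntegrable _ _
    simp_rw [show ∀ s, ((b - a) * f s - I) ^ 2 =
      (b - a) ^ 2 * f s ^ 2 - 2 * (b - a) * I * f s + I ^ 2 from fun s => by ring]
    rw [intervalIntegral.integral_add (hsq.sub hlin) intervalIntegrable_const,
      intervalIntegral.integral_sub hsq hlin, intervalIntegral.integral_const_mul,
      intervalIntegral.integral_const_mul, intervalIntegral.integral_const, smul_eq_mul]
    ring
  have hnonneg : 0 ≤ (b - a) * ((b - a) * J - I ^ 2) :=
    hexpand ▸ intervalIntegral.integral_nonneg hab fun s _ => sq_nonneg _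
  rcases hab.eq_or_lt with rfl | hlt
  · simp [I, J]
  · nlinarith [(mul_nonneg_iff_of_pos_left (sub_pos.2 hlt)).1 hnonneg]

theorem exists_exp_bound_of_antitone {E : ℝ → ℝ} (hE : Antitone E) (hE0 : ∀ t, 0 ≤ E t)
    {T r : ℝ} (hT : 0 < T) (hr : r < 1) (hstep : ∀ t, E (t + T) ≤ r * E t) :
    ∃ c > 0, ∃ lam > 0, ∀ t₀ t, t₀ ≤ t → E t ≤ c * E t₀ * Real.exp (-lam * (t - t₀)) := by
  -- `r` itself may be nonpositive; `ρ ≥ 1 / 2` keeps `Real.log ρ` meaningful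
  set ρ := max r (1 / 2)
  have hρ0 : 0 < ρ := lt_max_of_lt_right one_half_pos
  have hρ1 : ρ < 1 := max_lt hr one_half_lt_one
  have hiter : ∀ t₀ (k : ℕ), E (t₀ + k * T) ≤ ρ ^ k * E t₀ := by
    intro t₀ k
    induction k with
    | zero => simp
    | succ k ih =>
      calc E (t₀ + (k + 1 : ℕ) * T) = E ((t₀ + k * T) + T) := by push_cast; ring_nf
        _ ≤ ρ * E (t₀ + k * T) := (hstep _).trans (by gcongr; exacts [hE0 _, le_max_left _ _])
        _ ≤ ρ ^ (k + 1) * E t₀ := by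
          rw [pow_succ', mul_assoc]; exact mul_le_mul_of_nonneg_left ih hρ0.le
  have hlog : Real.log ρ < 0 := Real.log_neg hρ0 hρ1
  refine ⟨ρ⁻¹, inv_pos.2 hρ0, -Real.log ρ / T, div_pos (neg_pos.2 hlog) hT, fun t₀ t hle => ?_⟩
  set k := ⌊(t - t₀) / T⌋₊
  have hk : k * T ≤ t - t₀ :=
    (le_div_iff₀ hT).1 (Nat.floor_le (div_nonneg (sub_nonneg.2 hle) hT.le))
  have hk' : (t - t₀) / T - 1 < k := Nat.sub_one_lt_floor _
  have hpow : ρ ^ k ≤ ρ⁻¹ * Real.exp (-(-Real.log ρ / T) * (t - t₀)) := by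
    rw [← Real.exp_log hρ0, ← Real.exp_neg, ← Real.exp_add, ← Real.exp_nat_mul, Real.exp_log hρ0]
    refine Real.exp_le_exp.2 ?_
    have := mul_le_mul_of_nonpos_right hk'.le hlog.le
    field_simp at this ⊢
    nlinarith
  calc E t ≤ E (t₀ + k * T) := hE (by linarith)
    _ ≤ ρ ^ k * E t₀ := hiter t₀ k
    _ ≤ ρ⁻¹ * Real.exp (-(-Real.log ρ / T) * (t - t₀)) * E t₀ := by gcongr; exact hE0 _
    _ = ρ⁻¹ * E t₀ * Real.exp (-(-Real.log ρ / T) * (t - t₀)) := by ring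

lemma dotProduct_mulVec_of_intervalIntegral {ι : Type*} [Fintype ι] {A : ℝ → Matrix ι ι ℝ}
    (hA : Continuous A) (x : ι → ℝ) (a b : ℝ) :
    x ⬝ᵥ (of fun i j => ∫ τ in a..b, A τ i j) *ᵥ x = ∫ τ in a..b, x ⬝ᵥ A τ *ᵥ x := by
  have hAij : ∀ i j, Continuous fun τ => A τ i j := fun i j => hA.matrix_elem i j
  simp only [dotProduct, mulVec, of_apply, Finset.mul_sum]
  rw [intervalIntegral.integral_finsetSum fun i _ =>
    Continuous.intervalIntegrable (by fun_prop) _ _]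
  refine Finset.sum_congr rfl fun i _ => ?_
  rw [intervalIntegral.integral_finsetSum fun j _ =>
    Continuous.intervalIntegrable (by fun_prop) _ _]
  refine Finset.sum_congr rfl fun j _ => ?_
  rw [intervalIntegral.integral_const_mul, intervalIntegral.integral_mul_const]

section PersistentExcitation

variable {ι : Type*} [Fintype ι]

lemma dotProduct_sub_self_le_intervalIntegral {Z Z' : ℝ → ι → ℝ}
    (hZ : ∀ t, HasDerivAt Z (Z' t) t) (hZ' : Continuous Z') {a b : ℝ} (hab : a ≤ b) :
    (Z b - Z a) ⬝ᵥ (Z b - Z a) ≤ (b - a) * ∫ s in a..b, Z' s ⬝ᵥ Z' s := by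
  have hcomp : ∀ i, Z b i - Z a i = ∫ s in a..b, Z' s i := fun i =>
    (intervalIntegral.integral_eq_sub_of_hasDerivAt (fun s _ => hasDerivAt_pi.1 (hZ s) i)
      ((continuous_apply i |>.comp hZ').intervalIntegrable _ _)).symm
  calc (Z b - Z a) ⬝ᵥ (Z b - Z a) = ∑ i, (∫ s in a..b, Z' s i) ^ 2 := by
        simp [dotProduct, hcomp, sq]
    _ ≤ ∑ i, (b - a) * ∫ s in a..b, Z' s i ^ 2 :=
        Finset.sum_le_sum fun i _ => sq_intervalIntegral_le (continuous_apply i |>.comp hZ') hab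
    _ = (b - a) * ∫ s in a..b, Z' s ⬝ᵥ Z' s := by
        rw [← Finset.mul_sum, ← intervalIntegral.integral_finsetSum (f := fun i s => Z' s i ^ 2)
          fun i _ => ((continuous_apply i |>.comp hZ').pow 2).intervalIntegrable _ _]
        simp [dotProduct, sq]

variable {A : ℝ → Matrix ι ι ℝ} {Z : ℝ → ι → ℝ}

lemma hasDerivAt_dotProduct_self (hZ : ∀ t, HasDerivAt Z (-(A t *ᵥ Z t)) t) (t : ℝ) :
    HasDerivAt (fun s => Z s ⬝ᵥ Z s) (-2 * (Z t ⬝ᵥ A t *ᵥ Z t)) t := by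
  refine (HasDerivAt.fun_sum (u := Finset.univ) fun i _ =>
    (hasDerivAt_pi.1 (hZ t) i).fun_mul (hasDerivAt_pi.1 (hZ t) i)).congr_deriv ?_
  simp only [dotProduct, Finset.mul_sum, Pi.neg_apply]
  exact Finset.sum_congr rfl fun i _ => by ring

lemma mulVec_eq_of_hasDerivAt {κ : Type*} [Fintype κ] {B : Matrix κ ι ℝ}
    (hZ : ∀ t, HasDerivAt Z (-(A t *ᵥ Z t)) t) (hBA : ∀ t, B * A t = 0) (s t : ℝ) :
    B *ᵥ Z s = B *ᵥ Z t := by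
  have hderiv : ∀ t, HasDerivAt (fun t => B *ᵥ Z t) 0 t := fun t => by
    simpa [Function.comp_def, mulVec_neg, mulVec_mulVec, hBA] using
      (LinearMap.toContinuousLinearMap B.mulVecLin).hasFDerivAt.comp_hasDerivAt t (hZ t)
  exact is_const_of_deriv_eq_zero (fun t => (hderiv t).differentiableAt)
    (fun t => (hderiv t).deriv) s t

lemma dotProduct_sub_self_le_of_hasDerivAt (hA : Continuous A)
    (hZ : ∀ t, HasDerivAt Z (-(A t *ᵥ Z t)) t) {α : ℝ}
    (hA_sq : ∀ t x, A t *ᵥ x ⬝ᵥ A t *ᵥ x ≤ α * (x ⬝ᵥ A t *ᵥ x)) {a b : ℝ} (hab : a ≤ b) :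
    (Z b - Z a) ⬝ᵥ (Z b - Z a) ≤ (b - a) * (α * ∫ s in a..b, Z s ⬝ᵥ A s *ᵥ Z s) := by
  have hZc : Continuous Z := continuous_iff_continuousAt.2 fun t => (hZ t).continuousAt
  have hAZ : Continuous fun t => A t *ᵥ Z t := hA.matrix_mulVec hZc
  calc (Z b - Z a) ⬝ᵥ (Z b - Z a)
      ≤ (b - a) * ∫ s in a..b, -(A s *ᵥ Z s) ⬝ᵥ -(A s *ᵥ Z s) :=
        dotProduct_sub_self_le_intervalIntegral hZ hAZ.neg hab
    _ ≤ (b - a) * ∫ s in a..b, α * (Z s ⬝ᵥ A s *ᵥ Z s) := by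
        refine mul_le_mul_of_nonneg_left (intervalIntegral.integral_mono_on hab
          ((hAZ.neg.dotProduct hAZ.neg).intervalIntegrable _ _)
          ((continuous_const.mul (hZc.dotProduct hAZ)).intervalIntegrable _ _)
          fun s _ => ?_) (sub_nonneg.2 hab)
        simpa using hA_sq s (Z s)
    _ = (b - a) * (α * ∫ s in a..b, Z s ⬝ᵥ A s *ᵥ Z s) := by
        rw [intervalIntegral.integral_const_mul]

lemma dotProduct_self_eq_sub_intervalIntegral (hA : Continuous A)
    (hZ : ∀ t, HasDerivAt Z (-(A t *ᵥ Z t)) t) (a b : ℝ) :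
    Z b ⬝ᵥ Z b = Z a ⬝ᵥ Z a - 2 * ∫ s in a..b, Z s ⬝ᵥ A s *ᵥ Z s := by
  have hZc : Continuous Z := continuous_iff_continuousAt.2 fun t => (hZ t).continuousAt
  have := intervalIntegral.integral_eq_sub_of_hasDerivAt
    (fun s _ => hasDerivAt_dotProduct_self hZ s)
    ((continuous_const.mul (hZc.dotProduct (hA.matrix_mulVec hZc))).intervalIntegrable a b)
  rw [intervalIntegral.integral_const_mul] at this
  linarith

lemma dotProduct_mulVec_le_of_mem_Icc (hA : Continuous A)
    (hZ : ∀ t, HasDerivAt Z (-(A t *ᵥ Z t)) t) {α : ℝ} (hα : 0 ≤ α)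
    (hA_nonneg : ∀ t x, 0 ≤ x ⬝ᵥ A t *ᵥ x)
    (hA_le : ∀ t x, x ⬝ᵥ A t *ᵥ x ≤ α * (x ⬝ᵥ x))
    (hA_sq : ∀ t x, A t *ᵥ x ⬝ᵥ A t *ᵥ x ≤ α * (x ⬝ᵥ A t *ᵥ x)) {t τ T : ℝ}
    (hτ : τ ∈ Set.Icc t (t + T)) :
    Z t ⬝ᵥ A τ *ᵥ Z t ≤
      2 * (Z τ ⬝ᵥ A τ *ᵥ Z τ) + 2 * α ^ 2 * T * ∫ s in t..t + T, Z s ⬝ᵥ A s *ᵥ Z s := by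
  obtain ⟨htτ, hτT⟩ := hτ
  have hZc : Continuous Z := continuous_iff_continuousAt.2 fun t => (hZ t).continuousAt
  set S := ∫ s in t..t + T, Z s ⬝ᵥ A s *ᵥ Z s
  have hdrift : (Z τ - Z t) ⬝ᵥ (Z τ - Z t) ≤ T * (α * S) := by
    refine (dotProduct_sub_self_le_of_hasDerivAt hA hZ hA_sq htτ).trans ?_
    have hqS : ∫ s in t..τ, Z s ⬝ᵥ A s *ᵥ Z s ≤ S :=
      intervalIntegral.integral_mono_interval le_rfl htτ hτT
        (Filter.Eventually.of_forall fun s => hA_nonneg s (Z s))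
        ((hZc.dotProduct (hA.matrix_mulVec hZc)).intervalIntegrable _ _)
    have hq0 : 0 ≤ ∫ s in t..τ, Z s ⬝ᵥ A s *ᵥ Z s :=
      intervalIntegral.integral_nonneg htτ fun s _ => hA_nonneg s (Z s)
    exact mul_le_mul (by linarith) (mul_le_mul_of_nonneg_left hqS hα) (mul_nonneg hα hq0)
      (by linarith)
  calc Z t ⬝ᵥ A τ *ᵥ Z t = (Z τ - (Z τ - Z t)) ⬝ᵥ A τ *ᵥ (Z τ - (Z τ - Z t)) := by
        rw [sub_sub_cancel]
    _ ≤ 2 * (Z τ ⬝ᵥ A τ *ᵥ Z τ) + 2 * ((Z τ - Z t) ⬝ᵥ A τ *ᵥ (Z τ - Z t)) :=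
        dotProduct_sub_mulVec_sub_le (hA_nonneg τ) _ _
    _ ≤ 2 * (Z τ ⬝ᵥ A τ *ᵥ Z τ) + 2 * (α * (T * (α * S))) := by
        gcongr
        exact (hA_le τ _).trans (mul_le_mul_of_nonneg_left hdrift hα)
    _ = 2 * (Z τ ⬝ᵥ A τ *ᵥ Z τ) + 2 * α ^ 2 * T * S := by ring

theorem dotProduct_self_add_le_of_persistentExcitation (hA : Continuous A)
    (hZ : ∀ t, HasDerivAt Z (-(A t *ᵥ Z t)) t) {α ν T : ℝ} (hα : 0 ≤ α) (hT : 0 ≤ T)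
    (hA_nonneg : ∀ t x, 0 ≤ x ⬝ᵥ A t *ᵥ x)
    (hA_le : ∀ t x, x ⬝ᵥ A t *ᵥ x ≤ α * (x ⬝ᵥ x))
    (hA_sq : ∀ t x, A t *ᵥ x ⬝ᵥ A t *ᵥ x ≤ α * (x ⬝ᵥ A t *ᵥ x))
    (hPE : ∀ t, ν * (Z t ⬝ᵥ Z t) ≤ ∫ τ in t..t + T, Z t ⬝ᵥ A τ *ᵥ Z t) (t : ℝ) :
    Z (t + T) ⬝ᵥ Z (t + T) ≤ (1 - ν / (1 + α ^ 2 * T ^ 2)) * (Z t ⬝ᵥ Z t) := by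
  have hZc : Continuous Z := continuous_iff_continuousAt.2 fun t => (hZ t).continuousAt
  have hq : Continuous fun s => Z s ⬝ᵥ A s *ᵥ Z s := hZc.dotProduct (hA.matrix_mulVec hZc)
  set S := ∫ s in t..t + T, Z s ⬝ᵥ A s *ᵥ Z s
  have hwindow : ν * (Z t ⬝ᵥ Z t) ≤ 2 * (1 + α ^ 2 * T ^ 2) * S :=
    calc ν * (Z t ⬝ᵥ Z t) ≤ ∫ τ in t..t + T, Z t ⬝ᵥ A τ *ᵥ Z t := hPE t
      _ ≤ ∫ τ in t..t + T, (2 * (Z τ ⬝ᵥ A τ *ᵥ Z τ) + 2 * α ^ 2 * T * S) :=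
          intervalIntegral.integral_mono_on (le_add_of_nonneg_right hT)
            ((continuous_const.dotProduct (hA.matrix_mulVec continuous_const)).intervalIntegrable
              _ _)
            (((continuous_const.mul hq).add continuous_const).intervalIntegrable _ _)
            fun τ hτ => dotProduct_mulVec_le_of_mem_Icc hA hZ hα hA_nonneg hA_le hA_sq hτ
      _ = 2 * (1 + α ^ 2 * T ^ 2) * S := by
          rw [intervalIntegral.integral_add (f := fun τ => 2 * (Z τ ⬝ᵥ A τ *ᵥ Z τ))
            ((continuous_const.mul hq).intervalIntegrable _ _) intervalIntegrable_const,
            intervalIntegral.integral_const_mul, intervalIntegral.integral_const, smul_eq_mul]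
          ring
  have hshare : ν / (1 + α ^ 2 * T ^ 2) * (Z t ⬝ᵥ Z t) ≤ 2 * S := by
    rw [div_mul_eq_mul_div, div_le_iff₀ (by positivity)]
    linarith
  rw [dotProduct_self_eq_sub_intervalIntegral hA hZ t, sub_mul, one_mul]
  linarith

theorem exists_exp_bound_of_persistentExcitation (hA : Continuous A)
    (hZ : ∀ t, HasDerivAt Z (-(A t *ᵥ Z t)) t) {α ν T : ℝ} (hα : 0 ≤ α) (hT : 0 < T)
    (hν : 0 < ν) (hA_nonneg : ∀ t x, 0 ≤ x ⬝ᵥ A t *ᵥ x)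
    (hA_le : ∀ t x, x ⬝ᵥ A t *ᵥ x ≤ α * (x ⬝ᵥ x))
    (hA_sq : ∀ t x, A t *ᵥ x ⬝ᵥ A t *ᵥ x ≤ α * (x ⬝ᵥ A t *ᵥ x))
    (hPE : ∀ t, ν * (Z t ⬝ᵥ Z t) ≤ ∫ τ in t..t + T, Z t ⬝ᵥ A τ *ᵥ Z t) :
    ∃ c > 0, ∃ lam > 0, ∀ t₀ t, t₀ ≤ t →
      Z t ⬝ᵥ Z t ≤ c * (Z t₀ ⬝ᵥ Z t₀) * Real.exp (-lam * (t - t₀)) := by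
  have hanti : Antitone fun t => Z t ⬝ᵥ Z t :=
    antitone_of_deriv_nonpos (fun t => (hasDerivAt_dotProduct_self hZ t).differentiableAt)
      fun t => by
        rw [(hasDerivAt_dotProduct_self hZ t).deriv]
        linarith [hA_nonneg t (Z t)]
  exact exists_exp_bound_of_antitone hanti (fun t => dotProduct_self_nonneg _) hT
    (sub_lt_self _ (by positivity))
    (dotProduct_self_add_le_of_persistentExcitation hA hZ hα hT.le hA_nonneg hA_le hA_sq hPE)

end PersistentExcitation

lemma IsIncidence.mulVec_one {m n : ℕ} {H : Matrix (Fin m) (Fin n) ℝ} (hH : IsIncidence H) :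
    H *ᵥ (fun _ => 1) = 0 := by
  obtain ⟨hd, tl, hne, hval⟩ := hH
  funext k
  simp [mulVec, dotProduct, hval, Finset.sum_ite, Finset.filter_eq', (hne k).symm]

lemma Hbar_mulVec_apply {m n d : ℕ} (H : Matrix (Fin m) (Fin n) ℝ) (x : Fin n × Fin d → ℝ)
    (k : Fin m) (i : Fin d) : (Hbar d H *ᵥ x) (k, i) = (H *ᵥ fun j => x (j, i)) k := by
  simp [Hbar, mulVec, dotProduct, Fintype.sum_prod_type, one_apply]

lemma Hbar_mul_Umat {m n d : ℕ} {H : Matrix (Fin m) (Fin n) ℝ} (hH : IsIncidence H) :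
    Hbar d H * Umat n d = 0 := by
  ext ⟨k, i⟩ i'
  simp [Hbar, Umat, mul_apply, Fintype.sum_prod_type, one_apply]
  intro
  simpa [mulVec, dotProduct] using congrFun hH.mulVec_one k

lemma Umat_transpose_mul_Umat (n d : ℕ) : (Umat n d)ᵀ * Umat n d = (n : ℝ) • 1 := by
  ext i i'
  simp [Umat, mul_apply, Fintype.sum_prod_type, one_apply]
  split_ifs <;> simp_all [eq_comm]

lemma IsIncidence.exists_eq_const_of_mulVec_eq_zero {m n : ℕ} {H : Matrix (Fin m) (Fin n) ℝ}
    (hH : IsIncidence H) (hst : H.rank = n - 1) {v : Fin n → ℝ} (hv : H *ᵥ v = 0) :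
    ∃ c : ℝ, v = fun _ => c := by
  rcases Nat.eq_zero_or_pos n with rfl | hn
  · exact ⟨0, Subsingleton.elim _ _⟩
  have hker : Module.finrank ℝ (LinearMap.ker H.mulVecLin) = 1 := by
    have := LinearMap.finrank_range_add_finrank_ker H.mulVecLin
    rw [← Matrix.rank, hst, Module.finrank_fin_fun] at this
    omega
  have hone : (⟨fun _ => 1, hH.mulVec_one⟩ : LinearMap.ker H.mulVecLin) ≠ 0 := fun h => by
    simpa using congrFun (congrArg Subtype.val h) ⟨0, hn⟩
  obtain ⟨c, hc⟩ := (finrank_eq_one_iff_of_nonzero' _ hone).1 hker ⟨v, hv⟩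
  exact ⟨c, funext fun j => by simpa using (congrFun (congrArg Subtype.val hc) j).symm⟩

lemma injective_fromRows_Hbar_Umat_transpose {m n d : ℕ} {H : Matrix (Fin m) (Fin n) ℝ}
    (hH : IsIncidence H) (hst : H.rank = n - 1) :
    Function.Injective (fromRows (Hbar d H) (Umat n d)ᵀ).mulVec := by
  refine fun x y hxy => sub_eq_zero.1 (funext fun ⟨j, i⟩ => ?_)
  have hw : fromRows (Hbar d H) (Umat n d)ᵀ *ᵥ (x - y) = 0 := by rw [mulVec_sub, hxy, sub_self]
  obtain ⟨c, hc⟩ := hH.exists_eq_const_of_mulVec_eq_zero hst (v := fun j => (x - y) (j, i))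
    (funext fun k => by rw [← Hbar_mulVec_apply]; exact congrFun hw (Sum.inl (k, i)))
  have hsum : ∑ j, (x - y) (j, i) = 0 := by
    simpa [Umat, mulVec, dotProduct, Fintype.sum_prod_type] using congrFun hw (Sum.inr i)
  rw [hc] at hsum
  have hc0 : c = 0 := by simpa [(Fin.pos j).ne'] using hsum
  simpa [hc0] using congrFun hc j

lemma exists_pos_mul_dotProduct_self_le_laplacian {m n d : ℕ} {H : Matrix (Fin m) (Fin n) ℝ}
    (hH : IsIncidence H) (hst : H.rank = n - 1) :
    ∃ c > 0, ∀ x, (Umat n d)ᵀ *ᵥ x = 0 → c * (x ⬝ᵥ x) ≤ x ⬝ᵥ ((Hbar d H)ᵀ * Hbar d H) *ᵥ x := by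
  obtain ⟨c, hc, hcB⟩ :=
    exists_pos_mul_dotProduct_self_le (injective_fromRows_Hbar_Umat_transpose (d := d) hH hst)
  refine ⟨c, hc, fun x hx => ?_⟩
  have := hcB x
  rw [fromRows_mulVec, hx, sumElim_dotProduct_sumElim, dotProduct_zero, add_zero] at this
  rwa [← mulVec_mulVec, dotProduct_mulVec, vecMul_transpose]

lemma isStarProjection_proj {d : ℕ} {y : Fin d → ℝ} (hy : y ⬝ᵥ y = 1) :
    IsStarProjection (proj y) := by
  refine IsStarProjection.one_sub ⟨?_, ?_⟩
  · rw [IsIdempotentElem, vecMulVec_mul_vecMulVec, hy, one_smul]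
  · rw [IsSelfAdjoint, star_eq_conjTranspose, conjTranspose_eq_transpose_of_trivial,
      transpose_vecMulVec]

lemma blkProj_eq_submatrix_blockDiagonal {m d : ℕ} (g : Fin m → Fin d → ℝ) :
    blkProj g = (blockDiagonal fun k => proj (g k)).submatrix (Equiv.prodComm _ _)
      (Equiv.prodComm _ _) := by
  ext ⟨k, i⟩ ⟨k', i'⟩
  simp [blkProj, blockDiagonal_apply]

lemma isStarProjection_blkProj {m d : ℕ} {g : Fin m → Fin d → ℝ} (hg : ∀ k, g k ⬝ᵥ g k = 1) :
    IsStarProjection (blkProj g) := by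
  have hD : IsStarProjection (blockDiagonal fun k => proj (g k)) := by
    constructor
    · rw [IsIdempotentElem, ← blockDiagonal_mul]
      exact congrArg blockDiagonal
        (funext fun k => (isStarProjection_proj (hg k)).isIdempotentElem.eq)
    · rw [IsSelfAdjoint, star_eq_conjTranspose, blockDiagonal_conjTranspose]
      exact congrArg blockDiagonal
        (funext fun k => (isStarProjection_proj (hg k)).isSelfAdjoint.star_eq)
  rw [blkProj_eq_submatrix_blockDiagonal]
  constructor
  · rw [IsIdempotentElem, submatrix_mul_equiv, hD.isIdempotentElem.eq]
  · rw [IsSelfAdjoint, star_eq_conjTranspose, conjTranspose_submatrix, ← star_eq_conjTranspose,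
      hD.isSelfAdjoint.star_eq]

lemma continuous_blkProj {m d : ℕ} : Continuous (blkProj : (Fin m → Fin d → ℝ) → _) := by
  simp_rw [funext blkProj_eq_submatrix_blockDiagonal, proj]
  fun_prop

lemma blkProj_mulVec_apply {m d : ℕ} (g : Fin m → Fin d → ℝ) (y : Fin m × Fin d → ℝ)
    (k : Fin m) (i : Fin d) : (blkProj g *ᵥ y) (k, i) = (proj (g k) *ᵥ fun j => y (k, j)) i := by
  simp [blkProj, mulVec, dotProduct, Fintype.sum_prod_type, ite_mul]

lemma bearingOf_dotProduct_self {d : ℕ} {v : Fin d → ℝ} (hv : v ≠ 0) :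
    bearingOf v ⬝ᵥ bearingOf v = 1 := by
  have hpos : 0 < v ⬝ᵥ v := dotProduct_self_pos hv
  simp only [bearingOf, _root_.enorm, smul_dotProduct, dotProduct_smul, smul_eq_mul]
  rw [← mul_assoc, ← mul_inv, Real.mul_self_sqrt hpos.le, inv_mul_cancel₀ hpos.ne']

lemma proj_bearingOf_mulVec_self {d : ℕ} (v : Fin d → ℝ) : proj (bearingOf v) *ᵥ v = 0 := by
  rcases eq_or_ne v 0 with rfl | hv
  · exact mulVec_zero _
  have hpos : 0 < v ⬝ᵥ v := dotProduct_self_pos hv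
  rw [proj, sub_mulVec, one_mulVec, vecMulVec_mulVec, op_smul_eq_smul, sub_eq_zero]
  have hs : 0 < _root_.enorm v := Real.sqrt_pos.2 hpos
  have hdot : bearingOf v ⬝ᵥ v = _root_.enorm v := by
    rw [bearingOf, smul_dotProduct, smul_eq_mul, inv_mul_eq_iff_eq_mul₀ hs.ne', _root_.enorm,
      Real.mul_self_sqrt hpos.le]
  rw [hdot, bearingOf, smul_smul, mul_inv_cancel₀ hs.ne', one_smul]

lemma continuousAt_bearingOf {d : ℕ} {v : Fin d → ℝ} (hv : v ≠ 0) : ContinuousAt bearingOf v :=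
  (((continuous_id.dotProduct continuous_id).sqrt.continuousAt).inv₀
    (Real.sqrt_pos.2 (dotProduct_self_pos hv)).ne').smul continuousAt_id

lemma isStarProjection_blkProj_bearingOf {m n d : ℕ} (H : Matrix (Fin m) (Fin n) ℝ)
    {p : Fin n × Fin d → ℝ} (hnz : ∀ k, edgeVec H p k ≠ 0) :
    IsStarProjection (blkProj fun k => bearingOf (edgeVec H p k)) :=
  isStarProjection_blkProj fun k => bearingOf_dotProduct_self (hnz k)

lemma LB_mulVec_self {m n d : ℕ} (H : Matrix (Fin m) (Fin n) ℝ) (p : Fin n × Fin d → ℝ) :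
    LB H p *ᵥ p = 0 := by
  have h : blkProj (fun k => bearingOf (edgeVec H p k)) *ᵥ (Hbar d H *ᵥ p) = 0 :=
    funext fun ⟨k, i⟩ => by
      rw [blkProj_mulVec_apply]
      exact congrFun (proj_bearingOf_mulVec_self _) i
  rw [LB, ← mulVec_mulVec, ← mulVec_mulVec, h, mulVec_zero]

lemma LB_mul_Umat {m n d : ℕ} {H : Matrix (Fin m) (Fin n) ℝ} (hH : IsIncidence H)
    (p : Fin n × Fin d → ℝ) : LB H p * Umat n d = 0 := by
  rw [LB, Matrix.mul_assoc, Hbar_mul_Umat hH, Matrix.mul_zero]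

lemma Umat_transpose_mul_LB {m n d : ℕ} {H : Matrix (Fin m) (Fin n) ℝ} (hH : IsIncidence H)
    (p : Fin n × Fin d → ℝ) : (Umat n d)ᵀ * LB H p = 0 := by
  rw [LB, ← Matrix.mul_assoc, ← Matrix.mul_assoc, ← transpose_mul, Hbar_mul_Umat hH,
    transpose_zero, Matrix.zero_mul, Matrix.zero_mul]

lemma continuous_LB {m n d : ℕ} (H : Matrix (Fin m) (Fin n) ℝ) {p : ℝ → Fin n × Fin d → ℝ}
    (hp : Continuous p) (hnz : ∀ t k, edgeVec H (p t) k ≠ 0) : Continuous fun t => LB H (p t) := by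
  have hedge : ∀ k, Continuous fun t => edgeVec H (p t) k := fun k =>
    continuous_pi fun i => (continuous_apply (k, i)).comp (continuous_const.matrix_mulVec hp)
  have hbearing : Continuous fun t k => bearingOf (edgeVec H (p t) k) :=
    continuous_pi fun k => continuous_iff_continuousAt.2 fun t =>
      ContinuousAt.comp (f := fun t => edgeVec H (p t) k) (continuousAt_bearingOf (hnz t k))
        (hedge k).continuousAt
  exact (continuous_const.matrix_mul (continuous_blkProj.comp hbearing)).matrix_mul
    continuous_const

noncomputable def centroidShift (n d : ℕ) (x : Fin n × Fin d → ℝ) : Fin n × Fin d → ℝ :=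
  (n : ℝ)⁻¹ • Umat n d *ᵥ ((Umat n d)ᵀ *ᵥ x)

lemma LB_mulVec_centroidShift {m n d : ℕ} {H : Matrix (Fin m) (Fin n) ℝ} (hH : IsIncidence H)
    (p x : Fin n × Fin d → ℝ) : LB H p *ᵥ centroidShift n d x = 0 := by
  rw [centroidShift, mulVec_smul, mulVec_mulVec, LB_mul_Umat hH, zero_mulVec, smul_zero]

lemma Umat_transpose_mulVec_sub_centroidShift {n d : ℕ} (x : Fin n × Fin d → ℝ) :
    (Umat n d)ᵀ *ᵥ (x - centroidShift n d x) = 0 := by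
  rcases eq_or_ne n 0 with rfl | hn
  · funext i
    simp [mulVec, dotProduct]
  rw [mulVec_sub, centroidShift, mulVec_smul, mulVec_mulVec, Umat_transpose_mul_Umat,
    smul_mulVec, one_mulVec, smul_smul, inv_mul_cancel₀ (Nat.cast_ne_zero.2 hn), one_smul,
    sub_self]

section Observer

variable {m n d : ℕ} {H : Matrix (Fin m) (Fin n) ℝ} {p phat : ℝ → Fin n × Fin d → ℝ}

lemma hasDerivAt_observer_error (hH : IsIncidence H) (hp : Differentiable ℝ p)
    (hphat : Differentiable ℝ phat)
    (hobs : ∀ t, deriv phat t = deriv p t - LB H (p t) *ᵥ phat t) (x : Fin n × Fin d → ℝ)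
    (t : ℝ) :
    HasDerivAt (fun t => phat t - p t - centroidShift n d x)
      (-(LB H (p t) *ᵥ (phat t - p t - centroidShift n d x))) t := by
  refine (((hphat t).hasDerivAt.sub (hp t).hasDerivAt).sub_const _).congr_deriv ?_
  rw [hobs, sub_sub_cancel_left, mulVec_sub, mulVec_sub, LB_mulVec_self,
    LB_mulVec_centroidShift hH, sub_zero, sub_zero]

lemma Umat_transpose_mulVec_observer_error (hH : IsIncidence H) (hp : Differentiable ℝ p)
    (hphat : Differentiable ℝ phat)
    (hobs : ∀ t, deriv phat t = deriv p t - LB H (p t) *ᵥ phat t) (t : ℝ) :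
    (Umat n d)ᵀ *ᵥ (phat t - p t - centroidShift n d (phat 0 - p 0)) = 0 := by
  rw [mulVec_eq_of_hasDerivAt (hasDerivAt_observer_error hH hp hphat hobs _)
    (fun s => Umat_transpose_mul_LB hH (p s)) t 0]
  exact Umat_transpose_mulVec_sub_centroidShift _

end Observer

theorem statement_4_general {d m n : ℕ}
    (H : Matrix (Fin m) (Fin n) ℝ) (hH : IsIncidence H)
    -- the graph has a spanning tree (is connected): rank H = n - 1
    (hst : H.rank = n - 1)
    (p : ℝ → Fin n × Fin d → ℝ) (hp : Differentiable ℝ p)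
    (hnz : ∀ t : ℝ, ∀ k : Fin m, edgeVec H (p t) k ≠ 0)
    -- bearing persistence of excitation of the formation
    (T μ : ℝ) (hT : 0 < T) (hμ : 0 < μ)
    (hBPE : ∀ t : ℝ, ∀ x : Fin n × Fin d → ℝ,
      μ * (x ⬝ᵥ ((Hbar d H)ᵀ * Hbar d H).mulVec x) ≤
        x ⬝ᵥ (Matrix.of fun a b => ∫ τ in t..(t + T), LB H (p τ) a b).mulVec x)
    -- observer dynamics
    (phat : ℝ → Fin n × Fin d → ℝ) (hphat : Differentiable ℝ phat)
    (hobs : ∀ t : ℝ, deriv phat t = deriv p t - (LB H (p t)).mulVec (phat t)) :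
    ∃ c > (0 : ℝ), ∃ lam > (0 : ℝ), ∀ t₀ t : ℝ, t₀ ≤ t →
      ‖phat t - p t - (n : ℝ)⁻¹ •
          (Umat n d).mulVec ((Umat n d)ᵀ.mulVec (phat 0 - p 0))‖ ≤
        c * ‖phat t₀ - p t₀ - (n : ℝ)⁻¹ •
          (Umat n d).mulVec ((Umat n d)ᵀ.mulVec (phat 0 - p 0))‖ *
          Real.exp (-lam * (t - t₀)) := by
  set ζ : ℝ → Fin n × Fin d → ℝ := fun t => phat t - p t - centroidShift n d (phat 0 - p 0)
  have hζ : ∀ t, HasDerivAt ζ (-(LB H (p t) *ᵥ ζ t)) t :=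
    hasDerivAt_observer_error hH hp hphat hobs _
  have hLB : Continuous fun t => LB H (p t) := continuous_LB H hp.continuous hnz
  have hproj : ∀ t, IsStarProjection (blkProj fun k => bearingOf (edgeVec H (p t) k)) :=
    fun t => isStarProjection_blkProj_bearingOf H (hnz t)
  obtain ⟨lam, hlam, hgap⟩ := exists_pos_mul_dotProduct_self_le_laplacian (d := d) hH hst
  have hPE : ∀ t, μ * lam * (ζ t ⬝ᵥ ζ t) ≤ ∫ τ in t..t + T, ζ t ⬝ᵥ LB H (p τ) *ᵥ ζ t := fun t =>
    calc μ * lam * (ζ t ⬝ᵥ ζ t) ≤ μ * (ζ t ⬝ᵥ ((Hbar d H)ᵀ * Hbar d H) *ᵥ ζ t) := by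
          rw [mul_assoc]
          exact mul_le_mul_of_nonneg_left
            (hgap _ (Umat_transpose_mulVec_observer_error hH hp hphat hobs t)) hμ.le
      _ ≤ _ := hBPE t (ζ t)
      _ = _ := dotProduct_mulVec_of_intervalIntegral hLB _ _ _
  exact exists_norm_exp_bound_of_dotProduct_self <|
    exists_exp_bound_of_persistentExcitation hLB hζ (by positivity) hT (mul_pos hμ hlam)
      (fun t => (hproj t).dotProduct_transpose_mul_mul_mulVec_nonneg _)
      (fun t => (hproj t).dotProduct_transpose_mul_mul_mulVec_le _)
      (fun t => (hproj t).transpose_mul_mul_mulVec_dotProduct_self_le _) hPE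

/-- for a bearing persistently exciting formation over a graph with a
spanning tree, the observer `dp̂/dt = v - L_B(t) p̂` recovers the configuration `p(t)`
up to the fixed translational vector `(1/n) U Uᵀ (p̂(0) - p(0))`: the error
`ζ(t) = p̂(t) - p(t) - (1/n) U Uᵀ (p̂(0) - p(0))` is uniformly globally exponentially
stable. -/
theorem statement_4 {d m n : ℕ} (hd : 2 ≤ d)
    (H : Matrix (Fin m) (Fin n) ℝ) (hH : IsIncidence H)
    -- the graph has a spanning tree (is connected): rank H = n - 1
    (hst : H.rank = n - 1)
    (p : ℝ → Fin n × Fin d → ℝ) (hp : Differentiable ℝ p)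
    (hvbdd : ∃ C : ℝ, ∀ t : ℝ, ‖deriv p t‖ ≤ C)
    (hnz : ∀ t : ℝ, ∀ k : Fin m, edgeVec H (p t) k ≠ 0)
    -- bearing persistence of excitation of the formation
    (T μ : ℝ) (hT : 0 < T) (hμ : 0 < μ)
    (hBPE : ∀ t : ℝ, ∀ x : Fin n × Fin d → ℝ,
      μ * (x ⬝ᵥ ((Hbar d H)ᵀ * Hbar d H).mulVec x) ≤
        x ⬝ᵥ (Matrix.of fun a b => ∫ τ in t..(t + T), LB H (p τ) a b).mulVec x)
    -- observer dynamics
    (phat : ℝ → Fin n × Fin d → ℝ) (hphat : Differentiable ℝ phat)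
    (hobs : ∀ t : ℝ, deriv phat t = deriv p t - (LB H (p t)).mulVec (phat t)) :
    ∃ c > (0 : ℝ), ∃ lam > (0 : ℝ), ∀ t₀ t : ℝ, t₀ ≤ t →
      ‖phat t - p t - (n : ℝ)⁻¹ •
          (Umat n d).mulVec ((Umat n d)ᵀ.mulVec (phat 0 - p 0))‖ ≤
        c * ‖phat t₀ - p t₀ - (n : ℝ)⁻¹ •
          (Umat n d).mulVec ((Umat n d)ᵀ.mulVec (phat 0 - p 0))‖ *
          Real.exp (-lam * (t - t₀)) :=
  statement_4_general H hH hst p hp hnz T μ hT hμ hBPE phat hphat hobs
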